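/- Explicit evaluations of generalized Eulerian numbers: for all 0 ≤ k ≤ n, (i) E(n,k)(0,0;c0,c∞) = C(n,k)·c0^{n−k}·c∞^{k}; (ii) E(n,k)(−1,1;c0,c∞) = C(n,k)·(c0+k)(c0+k+1)···(c0+n−1)·c∞(c∞−1)···(c∞−k+1); (iii) E(n,k)(a,b;c0,−c0) = (−1)^k·C(n,k)·c0(c0−a)···(c0−(n−1)a), independent of b. -/

import Mathlib

/-- Generalized Eulerian numbers E(n,k)(a,b;c0,c∞). -/
def gE (a b c0 ci : ℚ) : ℕ → ℕ → ℚ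
  | 0, 0 => 1
  | 0, _+1 => 0
  | n+1, 0 => (-a * n + c0) * gE a b c0 ci n 0
  | n+1, k+1 => (-a * n + b * (k+1) + c0) * gE a b c0 ci n (k+1)
      + ((a+b) * n - b * k + ci) * gE a b c0 ci n k

private lemma chooseId (n k : ℕ) :
    ((k : ℚ) + 1) * (Nat.choose n (k+1) : ℚ) = ((n : ℚ) - k) * (Nat.choose n k : ℚ) := by
  rcases le_or_gt k n with h | h
  · have h1 := Nat.choose_succ_right_eq n k
    have h2 : ((n - k : ℕ) : ℚ) = (n : ℚ) - k := by
      push_cast [Nat.cast_sub h]; ring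
    have := congrArg (fun m : ℕ => (m : ℚ)) h1
    push_cast at this
    rw [h2] at this
    linarith
  · rw [Nat.choose_eq_zero_of_lt h, Nat.choose_eq_zero_of_lt (by omega)]
    simp

private lemma gE1 (c0 ci : ℚ) : ∀ n k, gE 0 0 c0 ci n k
    = (Nat.choose n k : ℚ) * c0^(n-k) * ci^k := by
  intro n
  induction n with
  | zero => intro k; cases k <;> simp [gE]
  | succ n ih =>
    intro k
    cases k with
    | zero =>
      simp only [gE, ih 0]
      simp [pow_succ]
      ring
    | succ k =>
      rw [show gE 0 0 c0 ci (n+1) (k+1) = (-0 * n + 0 * (k+1) + c0) * gE 0 0 c0 ci n (k+1)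
          + ((0+0) * n - 0 * k + ci) * gE 0 0 c0 ci n k from rfl, ih, ih]
      rcases lt_trichotomy k n with h | h | h
      · have h1 : n - k = (n - (k+1)) + 1 := by omega
        have h2 : (n+1) - (k+1) = n - k := by omega
        rw [h2, h1, Nat.choose_succ_succ]
        push_cast
        ring
      · subst h
        simp [Nat.choose_eq_zero_of_lt, Nat.choose_self, pow_succ]
        ring
      · rw [Nat.choose_eq_zero_of_lt h, Nat.choose_eq_zero_of_lt (by omega),
          Nat.choose_eq_zero_of_lt (by omega)]
        ring

private lemma gE3 (a c0 : ℚ) : ∀ (b : ℚ) (n k : ℕ), gE a b c0 (-c0) n k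
    = (-1 : ℚ)^k * (Nat.choose n k : ℚ) * ∏ i ∈ Finset.range n, (c0 - (i : ℚ) * a) := by
  intro b n
  induction n with
  | zero => intro k; cases k <;> simp [gE]
  | succ n ih =>
    intro k
    cases k with
    | zero =>
      rw [show gE a b c0 (-c0) (n+1) 0 = (-a * n + c0) * gE a b c0 (-c0) n 0 from rfl,
        ih, Finset.prod_range_succ]
      simp
      ring
    | succ k =>
      rw [show gE a b c0 (-c0) (n+1) (k+1) = (-a * n + b * (k+1) + c0) * gE a b c0 (-c0) n (k+1)
          + ((a+b) * n - b * k + (-c0)) * gE a b c0 (-c0) n k from rfl, ih, ih,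
        Finset.prod_range_succ, Nat.choose_succ_succ]
      have hId := chooseId n k
      push_cast
      linear_combination ((-1 : ℚ)^(k+1) * (∏ i ∈ Finset.range n, (c0 - (i : ℚ) * a)) * b) * hId

private lemma shiftProd (c : ℚ) (m : ℕ) :
    ∏ i ∈ Finset.range (m+1), (c + (i : ℚ)) = c * ∏ i ∈ Finset.range m, (c + 1 + (i : ℚ)) := by
  rw [Finset.prod_range_succ']
  have : ∀ i ∈ Finset.range m, (c + ((i+1 : ℕ) : ℚ)) = c + 1 + (i : ℚ) := by
    intro i _; push_cast; ring
  rw [Finset.prod_congr rfl this]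
  push_cast
  ring

private lemma gE2 (c0 ci : ℚ) : ∀ n k, gE (-1) 1 c0 ci n k
    = (Nat.choose n k : ℚ) * (∏ i ∈ Finset.range (n-k), (c0 + (k : ℚ) + (i : ℚ))) *
        ∏ i ∈ Finset.range k, (ci - (i : ℚ)) := by
  intro n
  induction n with
  | zero => intro k; cases k <;> simp [gE]
  | succ n ih =>
    intro k
    cases k with
    | zero =>
      rw [show gE (-1) 1 c0 ci (n+1) 0 = (-(-1) * n + c0) * gE (-1) 1 c0 ci n 0 from rfl, ih]
      simp only [Nat.sub_zero, Nat.choose_zero_right, Nat.cast_zero, Nat.cast_one,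
        Finset.range_zero, Finset.prod_empty]
      rw [Finset.prod_range_succ]
      ring
    | succ k =>
      rw [show gE (-1) 1 c0 ci (n+1) (k+1)
          = (-(-1) * n + 1 * (k+1) + c0) * gE (-1) 1 c0 ci n (k+1)
          + (((-1)+1) * n - 1 * k + ci) * gE (-1) 1 c0 ci n k from rfl, ih, ih]
      rcases lt_trichotomy k n with h | h | h
      · set m := n - (k+1) with hm
        have h1 : n - k = m + 1 := by omega
        have h2 : (n+1) - (k+1) = m + 1 := by omega
        rw [h1, h2, Nat.choose_succ_succ, Finset.prod_range_succ (fun i => ci - (i : ℚ)) k]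
        -- rewrite the (k) product via shift
        have hcast : ∀ i ∈ Finset.range m, (c0 + ((k : ℚ)) + 1 + (i : ℚ))
            = c0 + ((k+1 : ℕ) : ℚ) + (i : ℚ) := by
          intro i _; push_cast; ring
        have hA : ∏ i ∈ Finset.range (m+1), (c0 + (k : ℚ) + (i : ℚ))
            = (c0 + (k : ℚ)) * ∏ i ∈ Finset.range m, (c0 + ((k+1 : ℕ) : ℚ) + (i : ℚ)) := by
          rw [shiftProd (c0 + (k : ℚ)) m, Finset.prod_congr rfl hcast]
        have hB : ∏ i ∈ Finset.range (m+1), (c0 + ((k+1 : ℕ) : ℚ) + (i : ℚ))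
            = (∏ i ∈ Finset.range m, (c0 + ((k+1 : ℕ) : ℚ) + (i : ℚ))) * (c0 + (n : ℚ)) := by
          rw [Finset.prod_range_succ]
          congr 1
          have : ((m : ℚ)) = (n : ℚ) - k - 1 := by
            have : (m : ℕ) = n - (k+1) := hm
            have hk : ((n - (k+1) : ℕ) : ℚ) = (n : ℚ) - (k+1) := by
              push_cast [Nat.cast_sub (by omega : k + 1 ≤ n)]; ring
            rw [hm, hk]; push_cast; ring
          rw [this]; push_cast; ring
        rw [hA, hB]
        have hId := chooseId n k
        push_cast at hId ⊢
        linear_combination ((∏ i ∈ Finset.range m, (c0 + ((k : ℚ)+1) + (i : ℚ)))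
          * (∏ i ∈ Finset.range k, (ci - (i : ℚ))) * (ci - (k : ℚ))) * hId
      · subst h
        rw [Nat.choose_eq_zero_of_lt (by omega), Nat.choose_self, Nat.choose_self]
        simp only [Nat.sub_self, Nat.cast_zero, Nat.cast_one, Finset.range_zero,
          Finset.prod_empty, Nat.succ_sub_succ]
        rw [Finset.prod_range_succ]
        push_cast
        ring
      · rw [Nat.choose_eq_zero_of_lt h, Nat.choose_eq_zero_of_lt (by omega),
          Nat.choose_eq_zero_of_lt (by omega)]
        ring

theorem gE_explicit_evals (a c0 ci : ℚ) (n k : ℕ) (hkn : k ≤ n) :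
    gE 0 0 c0 ci n k = (Nat.choose n k : ℚ) * c0^(n-k) * ci^k ∧
    gE (-1) 1 c0 ci n k =
      (Nat.choose n k : ℚ) * (∏ i ∈ Finset.range (n-k), (c0 + (k : ℚ) + (i : ℚ))) *
        ∏ i ∈ Finset.range k, (ci - (i : ℚ)) ∧
    (∀ b : ℚ, gE a b c0 (-c0) n k =
      (-1 : ℚ)^k * (Nat.choose n k : ℚ) * ∏ i ∈ Finset.range n, (c0 - (i : ℚ) * a)) := by
  exact ⟨gE1 c0 ci n k, gE2 c0 ci n k, fun b => gE3 a c0 b n k⟩
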